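/- Let G be a D-regular Bonnet-Myers sharp graph of diameter L, x_0 a pole, and y a vertex with d(x_0, y) = k. Then 2d⁺(y) + d⁰(y) = 2D(1 − k/L) and 2d⁻(y) + d⁰(y) = 2kD/L. -/

import Mathlib

open Finset

namespace BMS

open scoped Classical

variable {V : Type*}

/-- The uniform probability measure on the closed 1-ball of `x` in a `D`-regular graph. -/
noncomputable def mu (G : SimpleGraph V) (D : ℕ) (x : V) : V → ℝ :=
  fun v => if G.dist x v ≤ 1 then 1 / (D + 1) else 0

/-- The L¹-Wasserstein distance between `μ_x` and `μ_y`, as an infimum over transport plans. -/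
noncomputable def W1 (G : SimpleGraph V) [Fintype V] (D : ℕ) (x y : V) : ℝ :=
  sInf { c : ℝ | ∃ π : V → V → ℝ,
    (∀ u v, 0 ≤ π u v) ∧
    (∀ u, ∑ v, π u v = mu G D x u) ∧
    (∀ v, ∑ u, π u v = mu G D y v) ∧
    c = ∑ u, ∑ v, (G.dist u v : ℝ) * π u v }

/-- Ollivier Ricci curvature (Lin–Lu–Yau normalization for regular graphs). -/
noncomputable def kappa (G : SimpleGraph V) [Fintype V] (D : ℕ) (x y : V) : ℝ :=
  ((D + 1) / D) * (1 - W1 G D x y)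

/-- `G` is Bonnet–Myers sharp: the infimum of the curvature over edges equals `2 / L`. -/
def BMSharp (G : SimpleGraph V) [Fintype V] (D L : ℕ) : Prop :=
  sInf { k : ℝ | ∃ x y, G.Adj x y ∧ k = kappa G D x y } = 2 / (L : ℝ)

/-- Number of neighbors of `y` at distance `k` from `x0`. -/
noncomputable def sphDeg (G : SimpleGraph V) [Fintype V] (x0 y : V) (k : ℕ) : ℕ :=
  (Finset.univ.filter (fun v => G.Adj y v ∧ G.dist x0 v = k)).card

/-- Number of triangles containing the edge `x ~ y` (common neighbors of `x` and `y`). -/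
noncomputable def tri (G : SimpleGraph V) [Fintype V] (x y : V) : ℕ :=
  (Finset.univ.filter (fun v => G.Adj x v ∧ G.Adj y v)).card

/-- A good optimal transport map from `B_1(a)` to `B_1(b)`: a bijection between the 1-balls,
fixing exactly the vertices of `B_1(a) ∩ B_1(b)` (among the domain), whose cost realizes
the Wasserstein distance `W1 (μ_a, μ_b)`. -/
def goodMap (G : SimpleGraph V) [Fintype V] (D : ℕ) (a b : V) (T : V → V) : Prop :=
  Set.BijOn T {v | G.dist a v ≤ 1} {v | G.dist b v ≤ 1} ∧
  (∀ v, G.dist a v ≤ 1 → (T v = v ↔ G.dist b v ≤ 1)) ∧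
  (1 / (D + 1 : ℝ)) *
      ∑ v ∈ Finset.univ.filter (fun v => G.dist a v ≤ 1), (G.dist v (T v) : ℝ) =
    W1 G D a b

/-!
Write `Δ = D - A` for the Laplacian `G.lapMatrix ℝ` and `d_q = G.dist q ·`, so that
`(Δ d_{x₀})(y) = d⁻(y) - d⁺(y)` while `d⁻(y) + d⁰(y) + d⁺(y) = D`. Testing the Wasserstein distance
with the 1-Lipschitz function `d_q` on an edge `x ~ y` with `d_q y = d_q x + 1`, the curvature bound
`κ(x, y) ≥ 2 / L` gives `(Δ d_q)(y) ≥ (Δ d_q)(x) + 2D/L`; along a geodesic from `q` this yields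
`(Δ d_q)(y) ≥ 2D d_q(y)/L - D` for every `y`. Add these bounds for `q = x₀` and for a vertex `p`
with `d(x₀, p) = L` and sum over `y`: the Laplacian terms sum to zero and `d_{x₀} + d_p ≥ L`, so
every bound is an equality: `(Δ d_{x₀})(y) = 2D d(x₀, y)/L - D`, and both identities follow.
-/

open Matrix

variable {G : SimpleGraph V} {D L : ℕ}

theorem _root_.SimpleGraph.Connected.exists_adj_dist_eq_of_dist_eq_succ (hconn : G.Connected)
    {q y : V} {n : ℕ} (h : G.dist q y = n + 1) : ∃ z, G.Adj z y ∧ G.dist q z = n := by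
  have hne : y ≠ q := by
    rintro rfl
    simp at h
  obtain ⟨w, hw⟩ := hconn.exists_walk_length_eq_dist y q
  obtain ⟨z, hadj, w', rfl⟩ := SimpleGraph.Walk.exists_eq_cons_of_ne hne w
  rw [SimpleGraph.dist_comm, h, SimpleGraph.Walk.length_cons] at hw
  have hle : G.dist q z ≤ n := by
    simpa [Nat.succ_injective hw] using SimpleGraph.dist_le w'.reverse
  have htri : G.dist q y ≤ G.dist q z + G.dist z y := hconn.dist_triangle
  rw [h, SimpleGraph.dist_eq_one_iff_adj.mpr hadj.symm] at htri
  exact ⟨z, hadj.symm, by omega⟩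

/-- For `k = 0` the truncated `k - 1 = 0` is harmless: every neighbour of `y = x₀` lies on the
sphere `1`. -/
theorem sphere_indicators_of_adj (hconn : G.Connected) {x₀ y v : V} {k : ℕ}
    (hk : G.dist x₀ y = k) (hv : G.Adj y v) :
    ((if G.dist x₀ v = k - 1 then 1 else 0) + (if G.dist x₀ v = k then 1 else 0)
        + (if G.dist x₀ v = k + 1 then 1 else 0) : ℝ) = 1 ∧
      (k : ℝ) - G.dist x₀ v
        = (if G.dist x₀ v = k - 1 then 1 else 0) - (if G.dist x₀ v = k + 1 then 1 else 0) := by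
  have hv0 : G.dist x₀ v = 0 → k = 1 := fun h ↦ by
    rw [← hk, hconn.dist_eq_zero_iff.mp h, SimpleGraph.dist_eq_one_iff_adj]
    exact hv.symm
  have hlevel : (0 < k ∧ G.dist x₀ v + 1 = k) ∨ (0 < k ∧ G.dist x₀ v = k)
      ∨ G.dist x₀ v = k + 1 := by
    rcases hv.diff_dist_adj (u := x₀) with h | h | h <;> omega
  rcases hlevel with ⟨-, h⟩ | ⟨-, h⟩ | h
  · rw [if_pos (by omega), if_neg (by omega), if_neg (by omega), ← h]
    constructor <;> push_cast <;> ring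
  · rw [if_neg (by omega), if_pos h, if_neg (by omega), h]
    constructor <;> ring
  · rw [if_neg (by omega), if_neg (by omega), if_pos h, h]
    constructor <;> push_cast <;> ring

section Finite

variable [Fintype V]

theorem sum_lapMatrix_mulVec {R : Type*} [CommRing R] (G : SimpleGraph V) (f : V → R) :
    ∑ v, (G.lapMatrix R *ᵥ f) v = 0 := by
  rw [← one_dotProduct, dotProduct_mulVec, ← Matrix.mulVec_transpose,
    (G.isSymm_lapMatrix (R := R)).eq]
  change (G.lapMatrix R *ᵥ fun _ ↦ 1) ⬝ᵥ f = 0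
  rw [SimpleGraph.lapMatrix_mulVec_const_eq_zero, zero_dotProduct]

theorem lapMatrix_mulVec_dist_self (hreg : G.IsRegularOfDegree D) (q : V) :
    (G.lapMatrix ℝ *ᵥ fun v ↦ (G.dist q v : ℝ)) q = -(D : ℝ) := by
  have hnbr : ∀ v ∈ G.neighborFinset q, (G.dist q v : ℝ) = 1 := fun v hv ↦ by
    rw [SimpleGraph.mem_neighborFinset] at hv
    exact_mod_cast SimpleGraph.dist_eq_one_iff_adj.mpr hv
  rw [SimpleGraph.lapMatrix_mulVec_apply, Finset.sum_congr rfl hnbr, SimpleGraph.dist_self,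
    Finset.sum_const, SimpleGraph.card_neighborFinset_eq_degree, hreg q]
  simp

theorem natCast_sphDeg (G : SimpleGraph V) (x₀ y : V) (j : ℕ) :
    (sphDeg G x₀ y j : ℝ) = ∑ v ∈ G.neighborFinset y, if G.dist x₀ v = j then 1 else 0 := by
  rw [← natCast_card_filter, SimpleGraph.neighborFinset_eq_filter, filter_filter, sphDeg]

theorem sphDeg_pred_add_sphDeg_add_sphDeg_succ (hconn : G.Connected)
    (hreg : G.IsRegularOfDegree D) {x₀ y : V} {k : ℕ} (hk : G.dist x₀ y = k) :
    (sphDeg G x₀ y (k - 1) + sphDeg G x₀ y k + sphDeg G x₀ y (k + 1) : ℝ) = D := by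
  rw [natCast_sphDeg, natCast_sphDeg, natCast_sphDeg, ← sum_add_distrib, ← sum_add_distrib,
    sum_congr rfl fun v hv ↦
      (sphere_indicators_of_adj hconn hk ((G.mem_neighborFinset y v).mp hv)).1,
    sum_const, SimpleGraph.card_neighborFinset_eq_degree, hreg y, nsmul_one]

theorem lapMatrix_mulVec_dist_eq_sphDeg_sub (hconn : G.Connected) {x₀ y : V} {k : ℕ}
    (hk : G.dist x₀ y = k) :
    (G.lapMatrix ℝ *ᵥ fun v ↦ (G.dist x₀ v : ℝ)) y
      = sphDeg G x₀ y (k - 1) - sphDeg G x₀ y (k + 1) := by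
  rw [natCast_sphDeg, natCast_sphDeg, ← sum_sub_distrib,
    ← sum_congr rfl fun v hv ↦
      (sphere_indicators_of_adj hconn hk ((G.mem_neighborFinset y v).mp hv)).2,
    sum_sub_distrib, sum_const, SimpleGraph.card_neighborFinset_eq_degree,
    SimpleGraph.lapMatrix_mulVec_apply, hk, nsmul_eq_mul]

theorem sum_mul_mu (hconn : G.Connected) (hreg : G.IsRegularOfDegree D) (f : V → ℝ) (x : V) :
    ∑ v, f v * mu G D x v = f x - (G.lapMatrix ℝ *ᵥ f) x / (D + 1) := by
  have hball : univ.filter (fun v ↦ G.dist x v ≤ 1) = insert x (G.neighborFinset x) := by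
    ext v
    simp only [mem_filter, mem_univ, true_and, mem_insert, SimpleGraph.mem_neighborFinset,
      Nat.le_one_iff_eq_zero_or_eq_one, hconn.dist_eq_zero_iff, SimpleGraph.dist_eq_one_iff_adj,
      eq_comm (a := v)]
  simp_rw [mu, mul_ite, mul_zero, mul_one_div]
  rw [← sum_filter, ← sum_div, hball, sum_insert (by simp), SimpleGraph.lapMatrix_mulVec_apply,
    hreg x]
  field_simp
  ring

theorem sum_mu (hconn : G.Connected) (hreg : G.IsRegularOfDegree D) (x : V) :
    ∑ v, mu G D x v = 1 := by
  simpa [SimpleGraph.lapMatrix_mulVec_const_eq_zero] using sum_mul_mu hconn hreg (fun _ ↦ 1) x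

theorem sub_le_W1 (hconn : G.Connected) (hreg : G.IsRegularOfDegree D) {f : V → ℝ}
    (hf : ∀ u v, f v - f u ≤ G.dist u v) (x y : V) :
    ∑ v, f v * mu G D y v - ∑ u, f u * mu G D x u ≤ W1 G D x y := by
  refine le_csInf ⟨_, fun u v ↦ mu G D x u * mu G D y v,
    fun u v ↦ ?_, fun u ↦ ?_, fun v ↦ ?_, rfl⟩ ?_
  · change 0 ≤ mu G D x u * mu G D y v
    unfold mu
    split_ifs <;> positivity
  · rw [← mul_sum, sum_mu hconn hreg, mul_one]
  · rw [← sum_mul, sum_mu hconn hreg, one_mul]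
  rintro c ⟨π, hπ, hx, hy, rfl⟩
  calc ∑ v, f v * mu G D y v - ∑ u, f u * mu G D x u
      = ∑ u, ∑ v, (f v - f u) * π u v := by
        simp_rw [← hx, ← hy, mul_sum, sub_mul, sum_sub_distrib]
        rw [sum_comm (f := fun v u ↦ f v * π u v)]
    _ ≤ ∑ u, ∑ v, (G.dist u v : ℝ) * π u v := by
        gcongr with u _ v _
        · exact hπ u v
        · exact hf u v

theorem two_div_le_kappa (hBM : BMSharp G D L) {x y : V} (hxy : G.Adj x y) :
    2 / L ≤ kappa G D x y := by
  have hfin : {k : ℝ | ∃ x y, G.Adj x y ∧ k = kappa G D x y}.Finite :=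
    (Set.finite_range fun p : V × V ↦ kappa G D p.1 p.2).subset
      fun _ ⟨x, y, _, hk⟩ ↦ ⟨(x, y), hk.symm⟩
  rw [← hBM]
  exact csInf_le hfin.bddBelow ⟨x, y, hxy, rfl⟩

theorem W1_le_of_BMSharp (hD : 0 < D) (hBM : BMSharp G D L) {x y : V} (hxy : G.Adj x y) :
    W1 G D x y ≤ 1 - 2 * D / ((D + 1) * L) := by
  have hκ := mul_le_mul_of_nonneg_left (two_div_le_kappa hBM hxy)
    (by positivity : (0 : ℝ) ≤ D / (D + 1))
  have hD' : (D : ℝ) ≠ 0 := by positivity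
  rw [kappa, ← mul_assoc, div_mul_div_cancel₀' hD', div_self (by positivity), one_mul,
    div_mul_div_comm, mul_comm (D : ℝ)] at hκ
  linarith

theorem lapMatrix_mulVec_add_le_of_adj (hconn : G.Connected) (hreg : G.IsRegularOfDegree D)
    (hD : 0 < D) (hBM : BMSharp G D L) {f : V → ℝ} (hf : ∀ u v, f v - f u ≤ G.dist u v)
    {x y : V} (hxy : G.Adj x y) (hstep : f y = f x + 1) :
    (G.lapMatrix ℝ *ᵥ f) x + 2 * D / L ≤ (G.lapMatrix ℝ *ᵥ f) y := by
  have h := (sub_le_W1 hconn hreg hf x y).trans (W1_le_of_BMSharp hD hBM hxy)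
  rw [sum_mul_mu hconn hreg, sum_mul_mu hconn hreg, hstep, mul_comm _ (L : ℝ), ← div_div] at h
  have key : ((G.lapMatrix ℝ *ᵥ f) x - (G.lapMatrix ℝ *ᵥ f) y) / (D + 1)
      ≤ -(2 * D / L) / (D + 1) := by
    rw [sub_div, neg_div]
    linarith
  linarith [(div_le_div_iff_of_pos_right (by positivity)).mp key]

theorem lapMatrix_mulVec_dist_ge (hconn : G.Connected) (hreg : G.IsRegularOfDegree D)
    (hD : 0 < D) (hBM : BMSharp G D L) (q y : V) :
    2 * D / L * G.dist q y - D ≤ (G.lapMatrix ℝ *ᵥ fun v ↦ (G.dist q v : ℝ)) y := by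
  have hlip : ∀ u v, (G.dist q v : ℝ) - G.dist q u ≤ G.dist u v := fun u v ↦ by
    have : (G.dist q v : ℝ) ≤ G.dist q u + G.dist u v := by exact_mod_cast hconn.dist_triangle
    linarith
  induction hn : G.dist q y generalizing y with
  | zero =>
    rw [hconn.dist_eq_zero_iff.mp hn, lapMatrix_mulVec_dist_self hreg]
    simp
  | succ n ih =>
    obtain ⟨z, hzy, hz⟩ := hconn.exists_adj_dist_eq_of_dist_eq_succ hn
    have hstep := lapMatrix_mulVec_add_le_of_adj hconn hreg hD hBM hlip hzy (by simp [hn, hz])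
    have hz' := ih z hz
    push_cast
    linarith

theorem lapMatrix_mulVec_dist_eq_of_dist_eq (hconn : G.Connected) (hreg : G.IsRegularOfDegree D)
    (hD : 0 < D) (hL : 0 < L) (hBM : BMSharp G D L) {x₀ p : V} (hp : G.dist x₀ p = L) (y : V) :
    (G.lapMatrix ℝ *ᵥ fun v ↦ (G.dist x₀ v : ℝ)) y = 2 * D / L * G.dist x₀ y - D := by
  obtain ⟨c, hc⟩ : ∃ c : ℝ, c = 2 * D / L := ⟨_, rfl⟩
  have hc0 : 0 ≤ c := hc ▸ by positivity
  have hcL : c * L = 2 * D := hc ▸ div_mul_cancel₀ _ (by positivity)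
  rw [← hc]
  let slack (q z : V) : ℝ := (G.lapMatrix ℝ *ᵥ fun v ↦ (G.dist q v : ℝ)) z - (c * G.dist q z - D)
  have hslack (q z : V) : 0 ≤ slack q z :=
    sub_nonneg.mpr (hc ▸ lapMatrix_mulVec_dist_ge hconn hreg hD hBM q z)
  have hsum : ∑ z, (slack x₀ z + slack p z) ≤ 0 := calc
    ∑ z, (slack x₀ z + slack p z)
        = ∑ z, (G.lapMatrix ℝ *ᵥ fun v ↦ (G.dist x₀ v : ℝ)) z
          + ∑ z, (G.lapMatrix ℝ *ᵥ fun v ↦ (G.dist p v : ℝ)) z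
          + ∑ z, c * (L - (G.dist x₀ z + G.dist p z)) := by
      rw [← sum_add_distrib, ← sum_add_distrib]
      refine sum_congr rfl fun z _ ↦ ?_
      linear_combination -hcL
    _ ≤ 0 := by
      rw [sum_lapMatrix_mulVec, sum_lapMatrix_mulVec, zero_add, zero_add]
      refine sum_nonpos fun z _ ↦ mul_nonpos_of_nonneg_of_nonpos hc0 ?_
      have : G.dist x₀ p ≤ G.dist x₀ z + G.dist z p := hconn.dist_triangle
      rw [hp, SimpleGraph.dist_comm (u := z)] at this
      exact sub_nonpos.mpr (by exact_mod_cast this)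
  have hslack_y := (sum_eq_zero_iff_of_nonneg fun z _ ↦ add_nonneg (hslack x₀ z) (hslack p z)).mp
    (le_antisymm hsum (sum_nonneg fun z _ ↦ add_nonneg (hslack x₀ z) (hslack p z))) y (mem_univ y)
  linarith [hslack x₀ y, hslack p y]

end Finite

theorem stmt_general [Fintype V] (G : SimpleGraph V) (hconn : G.Connected)
    (D L : ℕ) (hD : 0 < D) (hL : 0 < L) (hreg : G.IsRegularOfDegree D)
    (hBM : BMSharp G D L)
    (x0 : V) (hpole : ∃ p, G.dist x0 p = L)
    (y : V) (k : ℕ) (hk : G.dist x0 y = k) :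
    2 * (sphDeg G x0 y (k + 1) : ℝ) + (sphDeg G x0 y k : ℝ) = 2 * D * (1 - k / L) ∧
    2 * (sphDeg G x0 y (k - 1) : ℝ) + (sphDeg G x0 y k : ℝ) = 2 * k * D / L := by
  obtain ⟨p, hp⟩ := hpole
  have hdeg := sphDeg_pred_add_sphDeg_add_sphDeg_succ hconn hreg hk
  have hlap := lapMatrix_mulVec_dist_eq_sphDeg_sub hconn hk
  rw [lapMatrix_mulVec_dist_eq_of_dist_eq hconn hreg hD hL hBM hp, hk] at hlap
  constructor
  · rw [mul_one_sub, mul_div_assoc', mul_div_right_comm]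
    linarith
  · rw [mul_right_comm, mul_div_right_comm]
    linarith

theorem stmt [Fintype V] (G : SimpleGraph V) (hconn : G.Connected)
    (D L : ℕ) (hD : 0 < D) (hL : 0 < L) (hreg : G.IsRegularOfDegree D)
    (hdiam : G.diam = L) (hBM : BMSharp G D L)
    (x0 : V) (hpole : ∃ p, G.dist x0 p = L)
    (y : V) (k : ℕ) (hk : G.dist x0 y = k) :
    2 * (sphDeg G x0 y (k + 1) : ℝ) + (sphDeg G x0 y k : ℝ) = 2 * D * (1 - k / L) ∧
    2 * (sphDeg G x0 y (k - 1) : ℝ) + (sphDeg G x0 y k : ℝ) = 2 * k * D / L :=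
  stmt_general G hconn D L hD hL hreg hBM x0 hpole y k hk

end BMS
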